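/- Let C and D be categories, p : E → C a Grothendieck opfibration, and suppose F₀, F₁ : C → Cat are the straightenings of opfibrations p₀ : E₀ → C and p₁ : E₁ → C, with a cocartesian functor α : E₀ → E₁ over C. Define the gluing category Glue(α) over C × [1] whose fiber over (c, 0) is E₀(c), fiber over (c, 1) is E₁(c), with morphisms from objects over (c,0) to objects over (c',1) given by morphisms in E₁ after applying α. Then the projection Glue(α) → C × [1] is a Grothendieck opfibration, and cocartesian transport along (id_c, 0 → 1) is given by α_c. -/

import Mathlib

open CategoryTheory

universe v v₃ u₁ u₂ u₃

section Defs

variable {E : Type u₁} [Category.{v} E] {C : Type u₂} [Category.{v₃} C]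

/-- A morphism `f : a ⟶ b` of `E` is cocartesian with respect to `p : E ⥤ C`. -/
def IsCocartesianMor (p : E ⥤ C) {a b : E} (f : a ⟶ b) : Prop :=
  ∀ ⦃c : E⦄ (g : a ⟶ c) (w : p.obj b ⟶ p.obj c),
    p.map g = p.map f ≫ w → ∃! h : b ⟶ c, p.map h = w ∧ f ≫ h = g

/-- `p : E ⥤ C` is a Grothendieck opfibration. -/
def IsOpfibration (p : E ⥤ C) : Prop :=
  ∀ (a : E) ⦃y : C⦄ (u : p.obj a ⟶ y),
    ∃ (b : E) (f : a ⟶ b) (hb : p.obj b = y),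
      p.map f ≫ eqToHom hb = u ∧ IsCocartesianMor p f

end Defs

section Glue

variable {E₀ : Type u₁} [Category.{v} E₀] {E₁ : Type u₂} [Category.{v} E₁]
  {C : Type u₃} [Category.{v₃} C]

/-- The underlying type of the gluing (collage) category of `α : E₀ ⥤ E₁`. -/
def Glue (_ : E₀ ⥤ E₁) : Type _ := E₀ ⊕ E₁

/-- Morphisms of the gluing category: morphisms of `E₀` and of `E₁`, and from an `E₀`-object
`e₀` to an `E₁`-object `e₁` the morphisms `α.obj e₀ ⟶ e₁` of `E₁`; no morphisms from
`E₁`-objects to `E₀`-objects. -/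
def GlueHom (α : E₀ ⥤ E₁) : Glue α → Glue α → Type v
  | Sum.inl a, Sum.inl b => a ⟶ b
  | Sum.inl a, Sum.inr b => (α.obj a ⟶ b)
  | Sum.inr _, Sum.inl _ => PEmpty
  | Sum.inr a, Sum.inr b => a ⟶ b

def GlueId (α : E₀ ⥤ E₁) : ∀ X : Glue α, GlueHom α X X
  | Sum.inl a => 𝟙 a
  | Sum.inr a => 𝟙 a

def GlueComp (α : E₀ ⥤ E₁) :
    ∀ {X Y Z : Glue α}, GlueHom α X Y → GlueHom α Y Z → GlueHom α X Z
  | Sum.inl _, Sum.inl _, Sum.inl _, f, g => f ≫ g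
  | Sum.inl _, Sum.inl _, Sum.inr _, f, g => α.map f ≫ g
  | Sum.inl _, Sum.inr _, Sum.inr _, f, g => f ≫ g
  | Sum.inr _, Sum.inr _, Sum.inr _, f, g => f ≫ g
  | Sum.inl _, Sum.inr _, Sum.inl _, _, g => PEmpty.elim g
  | Sum.inr _, Sum.inl _, _, f, _ => PEmpty.elim f
  | Sum.inr _, Sum.inr _, Sum.inl _, _, g => PEmpty.elim g

instance glueCategory (α : E₀ ⥤ E₁) : Category (Glue α) where
  Hom := GlueHom α
  id := GlueId α
  comp := GlueComp α
  id_comp {X Y} f := by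
    cases X <;> cases Y <;>
      first
        | exact PEmpty.elim f
        | (revert f; simp [GlueHom, GlueComp, GlueId])
  comp_id {X Y} f := by
    cases X <;> cases Y <;>
      first
        | exact PEmpty.elim f
        | (revert f; simp [GlueHom, GlueComp, GlueId])
  assoc {X Y Z W} f g h := by
    cases X <;> cases Y <;> cases Z <;> cases W <;>
      first
        | exact PEmpty.elim f
        | exact PEmpty.elim g
        | exact PEmpty.elim h
        | (revert f g h; simp [GlueHom, GlueComp])

theorem glue_comp_def (α : E₀ ⥤ E₁) {X Y Z : Glue α} (f : X ⟶ Y) (g : Y ⟶ Z) :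
    f ≫ g = GlueComp α f g := rfl

theorem glue_id_def (α : E₀ ⥤ E₁) (X : Glue α) : 𝟙 X = GlueId α X := rfl

theorem mapAlphaEq (p₀ : E₀ ⥤ C) (p₁ : E₁ ⥤ C) (α : E₀ ⥤ E₁) (h : α ⋙ p₁ = p₀)
    {a b : E₀} (k : a ⟶ b) :
    p₁.map (α.map k) =
      eqToHom (Functor.congr_obj h a) ≫ p₀.map k ≫ eqToHom (Functor.congr_obj h b).symm :=
  Functor.congr_hom h k

/-- The projection from the gluing category to `C × [1]` (with `[1]` realized as the
preorder `Fin 2`). -/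
def glueProj (p₀ : E₀ ⥤ C) (p₁ : E₁ ⥤ C) (α : E₀ ⥤ E₁) (h : α ⋙ p₁ = p₀) :
    Glue α ⥤ C × Fin 2 where
  obj X := match X with
    | Sum.inl a => (p₀.obj a, 0)
    | Sum.inr a => (p₁.obj a, 1)
  map {X Y} f := match X, Y, f with
    | Sum.inl _, Sum.inl _, f => (p₀.map f, 𝟙 (0 : Fin 2))
    | Sum.inl a, Sum.inr _, f =>
        (eqToHom (Functor.congr_obj h a).symm ≫ p₁.map f, homOfLE (show (0 : Fin 2) ≤ 1 by decide))
    | Sum.inr _, Sum.inr _, f => (p₁.map f, 𝟙 (1 : Fin 2))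
    | Sum.inr _, Sum.inl _, f => PEmpty.elim f
  map_id X := by
    cases X <;>
      exact Prod.ext (by first | exact p₀.map_id _ | exact p₁.map_id _) (Subsingleton.elim _ _)
  map_comp {X Y Z} f g := by
    cases X <;> cases Y <;> cases Z <;>
      first
        | exact PEmpty.elim f
        | exact PEmpty.elim g
        | skip
    · exact Prod.ext (p₀.map_comp (f : _ ⟶ _) g) (Subsingleton.elim _ _)
    · rename_i a b c
      obtain ⟨f, rfl⟩ : ∃ f' : a ⟶ b, f' = f := ⟨f, rfl⟩
      obtain ⟨g, rfl⟩ : ∃ g' : α.obj b ⟶ c, g' = g := ⟨g, rfl⟩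
      exact Prod.ext
        (show eqToHom _ ≫ p₁.map (α.map f ≫ g) =
            p₀.map f ≫ eqToHom _ ≫ p₁.map g by
          rw [p₁.map_comp, mapAlphaEq p₀ p₁ α h]; simp)
        (Subsingleton.elim _ _)
    · rename_i a b c
      obtain ⟨f, rfl⟩ : ∃ f' : α.obj a ⟶ b, f' = f := ⟨f, rfl⟩
      obtain ⟨g, rfl⟩ : ∃ g' : b ⟶ c, g' = g := ⟨g, rfl⟩
      exact Prod.ext
        (show eqToHom _ ≫ p₁.map (f ≫ g) =
            (eqToHom _ ≫ p₁.map f) ≫ p₁.map g by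
          rw [p₁.map_comp]; simp)
        (Subsingleton.elim _ _)
    · exact Prod.ext (p₁.map_comp (f : _ ⟶ _) g) (Subsingleton.elim _ _)

/-- The canonical morphism `inl e ⟶ inr (α.obj e)` of the gluing category, given by the
identity of `α.obj e`. -/
def glueUnit (α : E₀ ⥤ E₁) (e : E₀) : GlueHom α (Sum.inl e) (Sum.inr (α.obj e)) :=
  𝟙 (α.obj e)

/-!
Lifts over `(c, 0)` are computed in `E₀` and lifts over `(c, 1)` in `E₁`. Morphisms of
`C × [1]` are determined by their `C`-component, so the universal property of a morphism of
`Glue α` against a target over `0` is the one in `E₀`, and against a target over `1` the one in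
`E₁`, read through `α` when the morphism lies in `E₀`: this is where `α` has to preserve
cocartesian morphisms. The unit `inl e ⟶ inr (α.obj e)` is the identity of `α.obj e`, hence
cocartesian.
-/

section GlueOpfibration

theorem isCocartesianMor_id {E D : Type*} [Category E] [Category D] (p : E ⥤ D) (a : E) :
    IsCocartesianMor p (𝟙 a) :=
  fun _ g _ hw => ⟨g, ⟨by simpa using hw, by simp⟩, fun _ ⟨_, hk⟩ => by simpa using hk⟩

theorem CategoryTheory.Prod.hom_eq_iff_fst_eq {D P : Type*} [Category D] [Preorder P]
    {X Y : D × P} {f g : X ⟶ Y} : f = g ↔ f.1 = g.1 :=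
  ⟨congrArg _, fun h => Prod.hom_ext h (Subsingleton.elim _ _)⟩

theorem exists_isCocartesianMor_lift_of_fst {E D P : Type*} [Category E] [Category D]
    [Preorder P] (q : E ⥤ D × P) {a b : E} (f : a ⟶ b) {y : D × P} (u : q.obj a ⟶ y)
    (hb : (q.obj b).1 = y.1) (hb' : (q.obj b).2 = y.2) (hu : (q.map f).1 ≫ eqToHom hb = u.1)
    (hf : IsCocartesianMor q f) :
    ∃ (b : E) (f : a ⟶ b) (hb : q.obj b = y), q.map f ≫ eqToHom hb = u ∧ IsCocartesianMor q f :=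
  ⟨b, f, Prod.ext hb hb', by rw [Prod.hom_eq_iff_fst_eq, prod_comp_fst, eqToHom_fst]; exact hu, hf⟩

variable (p₀ : E₀ ⥤ C) (p₁ : E₁ ⥤ C) (α : E₀ ⥤ E₁) (h : α ⋙ p₁ = p₀)

-- `simp` does not unfold `GlueHom`, so this only fires on morphisms typed as `GlueHom`:
-- that is why lifts obtained in `E₁` are ascribed this type below.
@[simp]
theorem glueProj_map_inl_inr_fst {a : E₀} {b : E₁} (f : GlueHom α (Sum.inl a) (Sum.inr b)) :
    ((glueProj p₀ p₁ α h).map (X := Sum.inl a) (Y := Sum.inr b) f).1 =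
      eqToHom (Functor.congr_obj h a).symm ≫ p₁.map f := rfl

theorem isCocartesianMor_glueProj_inr {a b : E₁} {f : a ⟶ b} (hf : IsCocartesianMor p₁ f) :
    IsCocartesianMor (glueProj p₀ p₁ α h) (a := Sum.inr a) (b := Sum.inr b) f := by
  rintro (c | c) g w hw
  · exact PEmpty.elim g
  simp only [Prod.hom_eq_iff_fst_eq, prod_comp_fst] at hw ⊢
  exact hf g w.1 hw

theorem isCocartesianMor_glueProj_inl_inr {a : E₀} {b : E₁}
    {f : GlueHom α (Sum.inl a) (Sum.inr b)} (hf : IsCocartesianMor p₁ f) :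
    IsCocartesianMor (glueProj p₀ p₁ α h) (a := Sum.inl a) (b := Sum.inr b) f := by
  subst h
  rintro (c | c) g w hw
  · exact absurd (leOfHom w.2 : (1 : Fin 2) ≤ 0) (by decide)
  simp only [Prod.hom_eq_iff_fst_eq, prod_comp_fst, glueProj_map_inl_inr_fst, eqToHom_refl,
    Category.id_comp] at hw ⊢
  exact hf g w.1 hw

theorem isCocartesianMor_glueProj_inl {a b : E₀} {f : a ⟶ b} (hf : IsCocartesianMor p₀ f)
    (hαf : IsCocartesianMor p₁ (α.map f)) :
    IsCocartesianMor (glueProj p₀ p₁ α h) (a := Sum.inl a) (b := Sum.inl b) f := by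
  subst h
  rintro (c | c) g w hw <;>
    simp only [Prod.hom_eq_iff_fst_eq, prod_comp_fst, glueProj_map_inl_inr_fst, eqToHom_refl,
      Category.id_comp] at hw ⊢
  · exact hf g w.1 hw
  · exact hαf g w.1 hw

theorem isOpfibration_glueProj (h₀ : IsOpfibration p₀) (h₁ : IsOpfibration p₁)
    (hα : ∀ {a b : E₀} (f : a ⟶ b), IsCocartesianMor p₀ f → IsCocartesianMor p₁ (α.map f)) :
    IsOpfibration (glueProj p₀ p₁ α h) := by
  subst h
  rintro (a | a) ⟨y, j⟩ u <;> fin_cases j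
  · obtain ⟨b, (f : GlueHom α (Sum.inl a) (Sum.inl b)), hb, hfu, hf⟩ := h₀ a u.1
    exact exists_isCocartesianMor_lift_of_fst (glueProj _ p₁ α rfl) f u hb rfl hfu
      (isCocartesianMor_glueProj_inl _ p₁ α rfl hf (hα f hf))
  · obtain ⟨b, (f : GlueHom α (Sum.inl a) (Sum.inr b)), hb, hfu, hf⟩ := h₁ (α.obj a) u.1
    refine exists_isCocartesianMor_lift_of_fst (glueProj _ p₁ α rfl) f u hb rfl ?_
      (isCocartesianMor_glueProj_inl_inr _ p₁ α rfl hf)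
    rw [glueProj_map_inl_inr_fst, eqToHom_refl, Category.id_comp]
    exact hfu
  · exact absurd (leOfHom u.2 : (1 : Fin 2) ≤ 0) (by decide)
  · obtain ⟨b, (f : GlueHom α (Sum.inr a) (Sum.inr b)), hb, hfu, hf⟩ := h₁ a u.1
    exact exists_isCocartesianMor_lift_of_fst (glueProj _ p₁ α rfl) f u hb rfl hfu
      (isCocartesianMor_glueProj_inr _ p₁ α rfl hf)

end GlueOpfibration

/-- Given opfibrations `p₀ : E₀ ⥤ C` and `p₁ : E₁ ⥤ C` and a cocartesian
functor `α : E₀ ⥤ E₁` over `C`, the projection of the gluing category `Glue(α)` to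
`C × [1]` is a Grothendieck opfibration, and cocartesian transport along the arrows
`(𝟙 c, 0 ⟶ 1)` is given by `α`: for each `e : E₀`, the canonical morphism
`inl e ⟶ inr (α.obj e)` (given by `𝟙 (α.obj e)`) is cocartesian. -/
theorem stmt_8 (p₀ : E₀ ⥤ C) (p₁ : E₁ ⥤ C)
    (h₀ : IsOpfibration p₀) (h₁ : IsOpfibration p₁)
    (α : E₀ ⥤ E₁) (h : α ⋙ p₁ = p₀)
    (hα : ∀ {a b : E₀} (f : a ⟶ b), IsCocartesianMor p₀ f → IsCocartesianMor p₁ (α.map f)) :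
    IsOpfibration (glueProj p₀ p₁ α h) ∧
      ∀ e : E₀,
        IsCocartesianMor (glueProj p₀ p₁ α h)
          (a := (Sum.inl e : Glue α)) (b := (Sum.inr (α.obj e) : Glue α))
          (glueUnit α e) :=
  ⟨isOpfibration_glueProj p₀ p₁ α h h₀ h₁ hα, fun e =>
    isCocartesianMor_glueProj_inl_inr p₀ p₁ α h (isCocartesianMor_id p₁ (α.obj e))⟩

end Glue
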